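/- arXiv:1908.01513 — 4 statements merged into one kernel-verified Lean document; each statement's English description precedes it below -/
import Mathlib

section
/- Let K ∈ ℝ, N ∈ (1,∞), let I ⊂ ℝ be a closed interval, and let F be a nonempty family of CD(K,N) densities each of whose support equals I. Then the pointwise infimum g(x) := inf_{f ∈ F} f(x) is continuous on I and satisfies g^{1/(N−1)}((1−t)x₀ + t·x₁) ≥ σ^{(1−t)}_{K,N−1}(|x₁−x₀|)·g^{1/(N−1)}(x₀) + σ^{(t)}_{K,N−1}(|x₁−x₀|)·g^{1/(N−1)}(x₁) for all x₀, x₁ ∈ I and all t ∈ (0,1); in particular, g is a CD(K,N) density. -/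
open MeasureTheory Filter Set Topology

/-!
Each member of the family dominates the infimum `g` at the two endpoints, so the right-hand side
of its `CD(K,N)` inequality bounds the left-hand side for `g`; taking the infimum over the family
(which commutes with the monotone continuous map `r ↦ r ^ (1/(N-1))`) gives the inequality for `g`.
The infimum of continuous functions is upper semicontinuous, and the inequality itself yields lower
semicontinuity: for `y` between `x` and a nearby `b ∈ I`, dropping the `b`-term gives
`g y ≥ (s(|b - y|) / s(|b - x|) · g x ^ (1/(N-1))) ^ (N-1)`, and the right side tends to `g x`.
-/

noncomputable def sOf (κ θ : ℝ) : ℝ :=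
  if 0 < κ then Real.sin (Real.sqrt κ * θ) / Real.sqrt κ
  else if κ = 0 then θ
  else Real.sinh (Real.sqrt (-κ) * θ) / Real.sqrt (-κ)

noncomputable def sigmaCoeff (K N t θ : ℝ) : ENNReal :=
  if Real.pi ^ 2 * (N - 1) ≤ K * θ ^ 2 then ⊤
  else if θ = 0 then ENNReal.ofReal t
  else ENNReal.ofReal (sOf (K / (N - 1)) (t * θ) / sOf (K / (N - 1)) θ)

noncomputable def densSupport (h : ℝ → ℝ) : Set ℝ :=
  {x : ℝ | ∀ U : Set ℝ, IsOpen U → x ∈ U →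
    0 < (volume.withDensity fun y => ENNReal.ofReal (h y)) U}

def IsQCDDensity (Q K N : ℝ) (h : ℝ → ℝ) : Prop :=
  (∀ x, 0 ≤ h x) ∧ ContinuousOn h (densSupport h) ∧
  ∀ x₀ ∈ densSupport h, ∀ x₁ ∈ densSupport h, ∀ t ∈ Set.Ioo (0:ℝ) 1,
    ENNReal.ofReal (Q ^ (-(1 / (N - 1)))) *
        (sigmaCoeff K N (1 - t) (|x₁ - x₀|) * ENNReal.ofReal (h x₀ ^ (1 / (N - 1))) +
          sigmaCoeff K N t (|x₁ - x₀|) * ENNReal.ofReal (h x₁ ^ (1 / (N - 1)))) ≤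
      ENNReal.ofReal (h ((1 - t) * x₀ + t * x₁) ^ (1 / (N - 1)))

def IsCDDensity (K N : ℝ) (h : ℝ → ℝ) : Prop := IsQCDDensity 1 K N h

lemma sOf_pos {κ θ : ℝ} (hθ : 0 < θ) (h : κ * θ ^ 2 < Real.pi ^ 2) : 0 < sOf κ θ := by
  unfold sOf
  split_ifs with hpos hzero
  · refine div_pos (Real.sin_pos_of_pos_of_lt_pi (by positivity) ?_) (Real.sqrt_pos.2 hpos)
    calc Real.sqrt κ * θ = Real.sqrt (κ * θ ^ 2) := by
          rw [Real.sqrt_mul hpos.le, Real.sqrt_sq hθ.le]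
      _ < Real.sqrt (Real.pi ^ 2) := Real.sqrt_lt_sqrt (by positivity) h
      _ = Real.pi := Real.sqrt_sq Real.pi_pos.le
  · exact hθ
  · have hneg : 0 < -κ := by push Not at hpos; exact neg_pos.2 (lt_of_le_of_ne hpos hzero)
    exact div_pos (Real.sinh_pos_iff.2 (mul_pos (Real.sqrt_pos.2 hneg) hθ))
      (Real.sqrt_pos.2 hneg)

lemma continuous_sOf (κ : ℝ) : Continuous (sOf κ) := by
  unfold sOf
  split_ifs
  · exact (Real.continuous_sin.comp (continuous_const.mul continuous_id)).div_const _
  · exact continuous_id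
  · exact (Real.continuous_sinh.comp (continuous_const.mul continuous_id)).div_const _

lemma sigmaCoeff_eq_ofReal {K N t θ : ℝ} (hθ : 0 < θ) (h : K * θ ^ 2 < Real.pi ^ 2 * (N - 1)) :
    sigmaCoeff K N t θ = ENNReal.ofReal (sOf (K / (N - 1)) (t * θ) / sOf (K / (N - 1)) θ) := by
  rw [sigmaCoeff, if_neg h.not_ge, if_neg hθ.ne']

lemma div_mul_sq_lt_pi_sq {K N θ : ℝ} (hN : 1 < N) (h : K * θ ^ 2 < Real.pi ^ 2 * (N - 1)) :
    K / (N - 1) * θ ^ 2 < Real.pi ^ 2 := by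
  rw [div_mul_eq_mul_div, div_lt_iff₀ (sub_pos.2 hN)]
  exact h

lemma ENNReal.ofReal_iInf_rpow {ι : Sort*} [Nonempty ι] {u : ι → ℝ} (hu : ∀ i, 0 ≤ u i)
    {p : ℝ} (hp : 0 < p) :
    ENNReal.ofReal ((⨅ i, u i) ^ p) = ⨅ i, ENNReal.ofReal (u i ^ p) := by
  rw [← ENNReal.ofReal_rpow_of_nonneg (Real.iInf_nonneg hu) hp.le, ENNReal.ofReal_iInf,
    (ENNReal.monotone_rpow_of_nonneg hp.le).map_iInf_of_continuousAt
      ENNReal.continuous_rpow_const.continuousAt (ENNReal.top_rpow_of_pos hp)]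
  simp only [Function.comp_def, ENNReal.ofReal_rpow_of_nonneg (hu _) hp.le]

def CDInequalityOn (K N : ℝ) (I : Set ℝ) (h : ℝ → ℝ) : Prop :=
  ∀ x₀ ∈ I, ∀ x₁ ∈ I, ∀ t ∈ Ioo (0:ℝ) 1,
    sigmaCoeff K N (1 - t) |x₁ - x₀| * ENNReal.ofReal (h x₀ ^ (1 / (N - 1))) +
        sigmaCoeff K N t |x₁ - x₀| * ENNReal.ofReal (h x₁ ^ (1 / (N - 1))) ≤
      ENNReal.ofReal (h ((1 - t) * x₀ + t * x₁) ^ (1 / (N - 1)))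

lemma isCDDensity_iff {K N : ℝ} {h : ℝ → ℝ} :
    IsCDDensity K N h ↔
      (∀ x, 0 ≤ h x) ∧ ContinuousOn h (densSupport h) ∧ CDInequalityOn K N (densSupport h) h := by
  simp [IsCDDensity, IsQCDDensity, CDInequalityOn]

lemma densSupport_mono {g f : ℝ → ℝ} (h : ∀ x, g x ≤ f x) : densSupport g ⊆ densSupport f :=
  fun _ hx U hU hxU => (hx U hU hxU).trans_le <|
    withDensity_mono (Eventually.of_forall fun y => ENNReal.ofReal_le_ofReal (h y)) U

namespace CDInequalityOn

variable {K N : ℝ} {I : Set ℝ} {g : ℝ → ℝ}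

lemma iInf (hN : 1 < N) {ι : Sort*} [Nonempty ι] {F : ι → ℝ → ℝ} (hF0 : ∀ i x, 0 ≤ F i x)
    (hF : ∀ i, CDInequalityOn K N I (F i)) : CDInequalityOn K N I fun x => ⨅ i, F i x := by
  have hp : 0 < 1 / (N - 1) := one_div_pos.2 (sub_pos.2 hN)
  have hle (i : ι) (x : ℝ) :
      ENNReal.ofReal ((⨅ j, F j x) ^ (1 / (N - 1))) ≤ ENNReal.ofReal (F i x ^ (1 / (N - 1))) :=
    ENNReal.ofReal_le_ofReal <| Real.rpow_le_rpow (Real.iInf_nonneg (hF0 · x))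
      (ciInf_le ⟨0, forall_mem_range.2 (hF0 · x)⟩ i) hp.le
  intro x₀ hx₀ x₁ hx₁ t ht
  dsimp only
  rw [ENNReal.ofReal_iInf_rpow (hF0 · ((1 - t) * x₀ + t * x₁)) hp]
  refine le_iInf fun i => le_trans ?_ (hF i x₀ hx₀ x₁ hx₁ t ht)
  gcongr _ * ?_ + _ * ?_ <;> apply hle

lemma rpow_le_of_mem_openSegment (hg : CDInequalityOn K N I g) (hN : 1 < N)
    (hg0 : ∀ x, 0 ≤ g x) {x b y : ℝ} (hx : x ∈ I) (hb : b ∈ I) (hxb : x ≠ b)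
    (hθ : K * |b - x| ^ 2 < Real.pi ^ 2 * (N - 1)) (hy : y ∈ openSegment ℝ x b) :
    (sOf (K / (N - 1)) |b - y| / sOf (K / (N - 1)) |b - x| * g x ^ (1 / (N - 1))) ^ (N - 1)
      ≤ g y := by
  rw [openSegment_eq_image] at hy
  obtain ⟨t, ⟨ht0, ht1⟩, rfl⟩ := hy
  simp only [smul_eq_mul]
  set κ := K / (N - 1)
  set p := 1 / (N - 1)
  set θ := |b - x|
  have hθ0 : 0 < θ := abs_pos.2 (sub_ne_zero.2 hxb.symm)
  have hdist : |b - ((1 - t) * x + t * b)| = (1 - t) * θ := by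
    rw [show b - ((1 - t) * x + t * b) = (1 - t) * (b - x) by ring, abs_mul,
      abs_of_pos (sub_pos.2 ht1)]
  have hκθ : κ * θ ^ 2 < Real.pi ^ 2 := div_mul_sq_lt_pi_sq hN hθ
  have hκθ' : κ * ((1 - t) * θ) ^ 2 < Real.pi ^ 2 := by
    rw [mul_pow, mul_left_comm]
    rcases le_or_gt (κ * θ ^ 2) 0 with hnp | hpos
    · nlinarith [Real.pi_pos]
    · nlinarith [mul_pos ht0 (sub_pos.2 ht1)]
  have hc : 0 ≤ sOf κ ((1 - t) * θ) / sOf κ θ :=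
    (div_pos (sOf_pos (mul_pos (sub_pos.2 ht1) hθ0) hκθ') (sOf_pos hθ0 hκθ)).le
  have hineq : ENNReal.ofReal (sOf κ ((1 - t) * θ) / sOf κ θ * g x ^ p) ≤
      ENNReal.ofReal (g ((1 - t) * x + t * b) ^ p) := by
    rw [ENNReal.ofReal_mul hc, ← sigmaCoeff_eq_ofReal hθ0 hθ]
    exact le_self_add.trans (hg x hx b hb t ⟨ht0, ht1⟩)
  rw [hdist]
  calc (sOf κ ((1 - t) * θ) / sOf κ θ * g x ^ p) ^ (N - 1)
      ≤ (g ((1 - t) * x + t * b) ^ p) ^ (N - 1) :=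
        Real.rpow_le_rpow (mul_nonneg hc (Real.rpow_nonneg (hg0 x) p))
          ((ENNReal.ofReal_le_ofReal_iff (Real.rpow_nonneg (hg0 _) p)).1 hineq) (sub_pos.2 hN).le
    _ = g ((1 - t) * x + t * b) := by
        rw [← Real.rpow_mul (hg0 _), one_div_mul_cancel (sub_pos.2 hN).ne', Real.rpow_one]

lemma eventually_lt_nhdsWithin_segment (hg : CDInequalityOn K N I g) (hN : 1 < N)
    (hg0 : ∀ x, 0 ≤ g x) {x b a : ℝ} (hx : x ∈ I) (hb : b ∈ I) (hxb : x ≠ b)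
    (hθ : K * |b - x| ^ 2 < Real.pi ^ 2 * (N - 1)) (ha : a < g x) :
    ∀ᶠ y in 𝓝[segment ℝ x b] x, a < g y := by
  set κ := K / (N - 1)
  have hs : 0 < sOf κ |b - x| :=
    sOf_pos (abs_pos.2 (sub_ne_zero.2 hxb.symm)) (div_mul_sq_lt_pi_sq hN hθ)
  set φ : ℝ → ℝ := fun y => (sOf κ |b - y| / sOf κ |b - x| * g x ^ (1 / (N - 1))) ^ (N - 1)
  have hφx : φ x = g x := by
    simp only [φ, div_self hs.ne', one_mul]
    rw [← Real.rpow_mul (hg0 x), one_div_mul_cancel (sub_pos.2 hN).ne', Real.rpow_one]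
  have hφ : ContinuousAt φ x :=
    ((((continuous_sOf κ).comp (continuous_const.sub continuous_id).abs).div_const _).mul
      continuous_const).continuousAt.rpow_const (Or.inr (sub_pos.2 hN).le)
  filter_upwards [self_mem_nhdsWithin, nhdsWithin_le_nhds
    ((hφ.eventually_const_lt (hφx ▸ ha)).and (eventually_ne_nhds hxb))] with y hy ⟨hay, hyb⟩
  rw [← insert_endpoints_openSegment] at hy
  rcases hy with rfl | rfl | hy
  · exact ha
  · exact absurd rfl hyb
  · exact hay.trans_le (hg.rpow_le_of_mem_openSegment hN hg0 hx hb hxb hθ hy)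

lemma eventually_lt_nhdsWithin_inter (hg : CDInequalityOn K N I g) (hN : 1 < N)
    (hg0 : ∀ x, 0 ≤ g x) {x a : ℝ} {J : Set ℝ}
    -- `J` is one of the half-lines `Iic x`, `Ici x`
    (hJ : ∀ b ∈ J, b ≠ x → segment ℝ x b ∈ 𝓝[J] x) (hx : x ∈ I) (ha : a < g x) :
    ∀ᶠ y in 𝓝[I ∩ J] x, a < g y := by
  by_cases h : ∃ b ∈ I ∩ J, b ≠ x ∧ K * |b - x| ^ 2 < Real.pi ^ 2 * (N - 1)
  · obtain ⟨b, ⟨hbI, hbJ⟩, hbx, hθ⟩ := h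
    exact ((nhdsWithin_mono x inter_subset_right).trans (nhdsWithin_le_of_mem (hJ b hbJ hbx)))
      (hg.eventually_lt_nhdsWithin_segment hN hg0 hx hbI hbx.symm hθ ha)
  · have hsmall : ∀ᶠ y in 𝓝 x, K * |y - x| ^ 2 < Real.pi ^ 2 * (N - 1) := by
      refine (continuous_const.mul ((continuous_id.sub continuous_const).abs.pow 2)).continuousAt
        |>.eventually_lt continuousAt_const ?_
      simpa using mul_pos (pow_pos Real.pi_pos 2) (sub_pos.2 hN)
    filter_upwards [self_mem_nhdsWithin, nhdsWithin_le_nhds hsmall] with y hy hθ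
    obtain rfl : y = x := by_contra fun hyx => h ⟨y, hy, hyx, hθ⟩
    exact ha

lemma lowerSemicontinuousWithinAt (hg : CDInequalityOn K N I g) (hN : 1 < N)
    (hg0 : ∀ x, 0 ≤ g x) {x : ℝ} (hx : x ∈ I) : LowerSemicontinuousWithinAt g I x := by
  intro a ha
  rw [← inter_univ I, ← Iic_union_Ici (a := x), inter_union_distrib_left, nhdsWithin_union,
    eventually_sup]
  constructor
  · refine hg.eventually_lt_nhdsWithin_inter hN hg0 (fun b hb hbx => ?_) hx ha
    rw [segment_symm, segment_eq_Icc hb]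
    exact Icc_mem_nhdsLE (lt_of_le_of_ne hb hbx)
  · refine hg.eventually_lt_nhdsWithin_inter hN hg0 (fun b hb hbx => ?_) hx ha
    rw [segment_eq_Icc hb]
    exact Icc_mem_nhdsGE (lt_of_le_of_ne hb (Ne.symm hbx))

lemma continuousOn (hg : CDInequalityOn K N I g) (hN : 1 < N)
    (hg0 : ∀ x, 0 ≤ g x) (hup : UpperSemicontinuousOn g I) : ContinuousOn g I := fun x hx =>
  continuousWithinAt_iff_lower_upperSemicontinuousWithinAt.2
    ⟨hg.lowerSemicontinuousWithinAt hN hg0 hx, hup x hx⟩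

end CDInequalityOn

theorem inf_of_cd_densities_is_cd_density_general (K N : ℝ) (hN : 1 < N)
    (I : Set ℝ)
    (S : Set (ℝ → ℝ)) (hS : S.Nonempty)
    (hall : ∀ f ∈ S, IsCDDensity K N f ∧ densSupport f = I) :
    ContinuousOn (fun x => ⨅ f : S, f.1 x) I ∧
    (∀ x₀ ∈ I, ∀ x₁ ∈ I, ∀ t ∈ Set.Ioo (0:ℝ) 1,
      sigmaCoeff K N (1 - t) (|x₁ - x₀|) *
          ENNReal.ofReal ((⨅ f : S, f.1 x₀) ^ (1 / (N - 1))) +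
        sigmaCoeff K N t (|x₁ - x₀|) *
          ENNReal.ofReal ((⨅ f : S, f.1 x₁) ^ (1 / (N - 1))) ≤
      ENNReal.ofReal ((⨅ f : S, f.1 ((1 - t) * x₀ + t * x₁)) ^ (1 / (N - 1)))) ∧
    IsCDDensity K N (fun x => ⨅ f : S, f.1 x) := by
  have : Nonempty S := hS.to_subtype
  have hf (f : S) : (∀ x, 0 ≤ f.1 x) ∧ ContinuousOn f.1 I ∧ CDInequalityOn K N I f.1 := by
    obtain ⟨hcd, hsupp⟩ := hall f.1 f.2
    exact hsupp ▸ isCDDensity_iff.1 hcd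
  have hbdd (x : ℝ) : BddBelow (range fun f : S => f.1 x) :=
    ⟨0, forall_mem_range.2 fun f => (hf f).1 x⟩
  have hg0 (x : ℝ) : 0 ≤ ⨅ f : S, f.1 x := Real.iInf_nonneg fun f => (hf f).1 x
  have hineq : CDInequalityOn K N I fun x => ⨅ f : S, f.1 x :=
    CDInequalityOn.iInf hN (fun f => (hf f).1) fun f => (hf f).2.2
  have hcont : ContinuousOn (fun x => ⨅ f : S, f.1 x) I :=
    hineq.continuousOn hN hg0 <|
      upperSemicontinuousOn_ciInf (fun x _ => hbdd x) fun f => (hf f).2.1.upperSemicontinuousOn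
  obtain ⟨f₀, hf₀⟩ := hS
  have hsupp : densSupport (fun x => ⨅ f : S, f.1 x) ⊆ I :=
    (hall f₀ hf₀).2 ▸ densSupport_mono fun x => ciInf_le (hbdd x) ⟨f₀, hf₀⟩
  exact ⟨hcont, hineq, isCDDensity_iff.2
    ⟨hg0, hcont.mono hsupp, fun x₀ h₀ x₁ h₁ => hineq x₀ (hsupp h₀) x₁ (hsupp h₁)⟩⟩

/-- The pointwise infimum of a nonempty family of `CD(K,N)` densities
with common support a closed interval `I` is continuous on `I`, satisfies the `CD(K,N)`
interpolation inequality on `I`, and is itself a `CD(K,N)` density. -/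
theorem inf_of_cd_densities_is_cd_density (K N : ℝ) (hN : 1 < N)
    (I : Set ℝ) (hIc : IsClosed I) (hIord : I.OrdConnected)
    (S : Set (ℝ → ℝ)) (hS : S.Nonempty)
    (hall : ∀ f ∈ S, IsCDDensity K N f ∧ densSupport f = I) :
    ContinuousOn (fun x => ⨅ f : S, f.1 x) I ∧
    (∀ x₀ ∈ I, ∀ x₁ ∈ I, ∀ t ∈ Set.Ioo (0:ℝ) 1,
      sigmaCoeff K N (1 - t) (|x₁ - x₀|) *
          ENNReal.ofReal ((⨅ f : S, f.1 x₀) ^ (1 / (N - 1))) +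
        sigmaCoeff K N t (|x₁ - x₀|) *
          ENNReal.ofReal ((⨅ f : S, f.1 x₁) ^ (1 / (N - 1))) ≤
      ENNReal.ofReal ((⨅ f : S, f.1 ((1 - t) * x₀ + t * x₁)) ^ (1 / (N - 1)))) ∧
    IsCDDensity K N (fun x => ⨅ f : S, f.1 x) :=
  inf_of_cd_densities_is_cd_density_general K N hN I S hS hall
end

section
/- Let K > 0, N ∈ (1,∞), and let h be an MCP(K,N) density. Then the diameter of supp h is at most π·√((N−1)/K); that is, |x₁ − x₀| ≤ π·√((N−1)/K) for all x₀, x₁ ∈ supp h. -/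
/-!
If two points of the support were at distance at least `π √((N-1)/K)`, the distortion coefficient
between them would be `∞`, and the MCP inequality at `t = 0` would read `∞ · h x₀ ≤ h x₀`, forcing
`h x₀ = 0`. A point of the support at distance strictly greater than `π √((N-1)/K)` from another
can be moved slightly within the support to a point where `h` is positive, a contradiction.
-/

open MeasureTheory Filter Set

def IsMCPDensity (K N : ℝ) (h : ℝ → ℝ) : Prop :=
  (∀ x, 0 ≤ h x) ∧ MeasureTheory.LocallyIntegrable h volume ∧
  ∀ x₀ ∈ densSupport h, ∀ x₁ ∈ densSupport h, ∀ t ∈ Set.Icc (0:ℝ) 1,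
    sigmaCoeff K N (1 - t) (|x₁ - x₀|) ^ (N - 1) * ENNReal.ofReal (h x₀) ≤
      ENNReal.ofReal (h ((1 - t) * x₀ + t * x₁))

open Real Metric

lemma sigmaCoeff_eq_top {K N θ : ℝ} (t : ℝ) (hK : 0 < K) (hN : 1 ≤ N)
    (hθ : π * √((N - 1) / K) ≤ θ) : sigmaCoeff K N t θ = ⊤ := by
  refine if_pos ?_
  have hsq := pow_le_pow_left₀ (by positivity) hθ 2
  rw [mul_pow, sq_sqrt (div_nonneg (sub_nonneg.2 hN) hK.le)] at hsq
  calc π ^ 2 * (N - 1) = K * (π ^ 2 * ((N - 1) / K)) := by field_simp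
    _ ≤ K * θ ^ 2 := by gcongr

lemma densSupport_eq_support (h : ℝ → ℝ) :
    densSupport h = (volume.withDensity fun y => ENNReal.ofReal (h y)).support := by
  rw [Measure.support_eq_forall_isOpen]
  ext x
  exact forall_congr' fun U => forall_comm

lemma exists_pos_near_of_mem_densSupport {h : ℝ → ℝ} {x ε : ℝ} (hx : x ∈ densSupport h)
    (hε : 0 < ε) : ∃ y ∈ densSupport h, dist y x < ε ∧ 0 < h y := by
  by_contra! hcon
  set μ := volume.withDensity fun y => ENNReal.ofReal (h y)
  have hS : densSupport h = μ.support := densSupport_eq_support h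
  have hnull : μ (ball x ε ∩ densSupport h) = 0 := by
    rw [withDensity_apply']
    refine setLIntegral_eq_zero (measurableSet_ball.inter ?_) fun y hy => ?_
    · exact hS ▸ Measure.isClosed_support.measurableSet
    · exact ENNReal.ofReal_eq_zero.2 (hcon y hy.2 hy.1)
  rw [measure_inter_conull (hS ▸ Measure.measure_compl_support)] at hnull
  exact (hx _ isOpen_ball (mem_ball_self hε)).ne' hnull

lemma IsMCPDensity.eq_zero_of_le_dist {K N : ℝ} {h : ℝ → ℝ} (hh : IsMCPDensity K N h)
    (hK : 0 < K) (hN : 1 < N) {x₀ x₁ : ℝ} (hx₀ : x₀ ∈ densSupport h)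
    (hx₁ : x₁ ∈ densSupport h) (hdist : π * √((N - 1) / K) ≤ |x₁ - x₀|) : h x₀ = 0 := by
  have hmcp := hh.2.2 x₀ hx₀ x₁ hx₁ 0 ⟨le_rfl, zero_le_one⟩
  rw [sigmaCoeff_eq_top _ hK hN.le hdist, ENNReal.top_rpow_of_pos (sub_pos.2 hN),
    sub_zero, one_mul, zero_mul, add_zero] at hmcp
  have hzero : ENNReal.ofReal (h x₀) = 0 := by
    by_contra hne
    rw [ENNReal.top_mul hne] at hmcp
    exact ENNReal.ofReal_ne_top (top_le_iff.1 hmcp)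
  exact le_antisymm (ENNReal.ofReal_eq_zero.1 hzero) (hh.1 x₀)

/-- (Bonnet–Myers for one-dimensional `MCP(K,N)` densities, `K > 0`.)
The support of an `MCP(K,N)` density has diameter at most `π·√((N−1)/K)`. -/
theorem mcp_density_diam_le (K N : ℝ) (hK : 0 < K) (hN : 1 < N) (h : ℝ → ℝ)
    (hh : IsMCPDensity K N h) :
    ∀ x₀ ∈ densSupport h, ∀ x₁ ∈ densSupport h,
      |x₁ - x₀| ≤ Real.pi * Real.sqrt ((N - 1) / K) := by
  intro x₀ hx₀ x₁ hx₁
  by_contra! hgt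
  obtain ⟨y₀, hy₀, hy₀x₀, hy₀pos⟩ :=
    exists_pos_near_of_mem_densSupport hx₀ (sub_pos.2 hgt)
  refine hy₀pos.ne' (hh.eq_zero_of_le_dist hK hN hy₀ hx₁ ?_)
  have htri := abs_sub_le x₁ y₀ x₀
  rw [dist_eq] at hy₀x₀
  linarith
end

section
/- Define h : ℝ → [0,∞) by h(x) := 1 + |x| for x ∈ [−1,1] and h(x) := 0 otherwise. Then h is a QCD(2,0,2) density, but for no K' ∈ ℝ and N' ∈ (1,∞) is h a CD(K',N') density. -/
/-!
On its support `[-1, 1]` the density takes values in `[1, 2]`. For `K = 0` the distortion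
coefficients are `σ⁽ᵗ⁾ = t`, so the right-hand side of the `QCD(2, 0, N)` inequality is at most
`2^{-1/(N-1)} · 2^{1/(N-1)} = 1 ≤ h^{1/(N-1)}` at the intermediate point.

Testing `CD(K, N)` at `x₀ = -a`, `x₁ = a`, `t = 1/2` would give
`2 σ⁽¹ᐟ²⁾(2a) (1 + a)^{1/(N-1)} ≤ h(0)^{1/(N-1)} = 1`. For `K ≥ 0` concavity of `sin` gives
`σ⁽¹ᐟ²⁾ ≥ 1/2`, and `a = 1` violates this. For `K < 0` one has `σ⁽¹ᐟ²⁾(2a) = 1 / (2 cosh (c a))`,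
and `cosh (c a) = 1 + O(a²)` is beaten by `(1 + a)^{1/(N-1)}`, which grows linearly, for small `a`.
-/

open MeasureTheory Filter Set

open Real
open scoped Topology

lemma sigmaCoeff_of_lt {K N t θ : ℝ} (hθ : θ ≠ 0) (h : K * θ ^ 2 < π ^ 2 * (N - 1)) :
    sigmaCoeff K N t θ = ENNReal.ofReal (sOf (K / (N - 1)) (t * θ) / sOf (K / (N - 1)) θ) := by
  rw [sigmaCoeff, if_neg h.not_ge, if_neg hθ]

lemma sigmaCoeff_zero {N : ℝ} (hN : 1 < N) (t θ : ℝ) : sigmaCoeff 0 N t θ = ENNReal.ofReal t := by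
  have hpos : 0 * θ ^ 2 < π ^ 2 * (N - 1) := by
    rw [zero_mul]; exact mul_pos (pow_pos pi_pos 2) (sub_pos.2 hN)
  rcases eq_or_ne θ 0 with rfl | hθ
  · rw [sigmaCoeff, if_neg hpos.not_ge, if_pos rfl]
  · rw [sigmaCoeff_of_lt hθ hpos, zero_div, sOf, sOf]
    simp [hθ]

lemma sigmaCoeff_of_neg {K N : ℝ} (hK : K < 0) (hN : 1 < N) (t : ℝ) {θ : ℝ} (hθ : θ ≠ 0) :
    sigmaCoeff K N t θ = ENNReal.ofReal
      (sinh (√(-(K / (N - 1))) * (t * θ)) / sinh (√(-(K / (N - 1))) * θ)) := by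
  have hκ : K / (N - 1) < 0 := div_neg_of_neg_of_pos hK (by linarith)
  have hsOf (x : ℝ) : sOf (K / (N - 1)) x = sinh (√(-(K / (N - 1))) * x) / √(-(K / (N - 1))) := by
    rw [sOf, if_neg hκ.not_gt, if_neg hκ.ne]
  have hc : √(-(K / (N - 1))) ≠ 0 := (sqrt_pos.2 (neg_pos.2 hκ)).ne'
  have hlt : K * θ ^ 2 < π ^ 2 * (N - 1) := by
    nlinarith [mul_pos (pow_pos pi_pos 2) (sub_pos.2 hN), sq_nonneg θ]
  rw [sigmaCoeff_of_lt hθ hlt, hsOf, hsOf, div_div_div_cancel_right₀ hc]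

lemma le_sin_mul_div_sin {x t : ℝ} (hx : x ∈ Ioo 0 π) (ht : t ∈ Icc (0 : ℝ) 1) :
    t ≤ sin (t * x) / sin x := by
  have hsin : 0 < sin x := sin_pos_of_pos_of_lt_pi hx.1 hx.2
  rw [le_div_iff₀ hsin]
  have := strictConcaveOn_sin_Icc.concaveOn.2 (x := 0) (y := x) ⟨le_rfl, pi_pos.le⟩
    ⟨hx.1.le, hx.2.le⟩ (sub_nonneg.2 ht.2) ht.1 (by ring)
  simpa using this

lemma ofReal_le_sigmaCoeff_of_nonneg {K N t θ : ℝ} (hK : 0 ≤ K) (hN : 1 < N)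
    (ht : t ∈ Icc (0 : ℝ) 1) (hθ : 0 ≤ θ) : ENNReal.ofReal t ≤ sigmaCoeff K N t θ := by
  rcases hK.eq_or_lt with rfl | hK
  · exact (sigmaCoeff_zero hN t θ).ge
  by_cases htop : π ^ 2 * (N - 1) ≤ K * θ ^ 2
  · simp [sigmaCoeff, htop]
  rcases hθ.eq_or_lt with rfl | hθ
  · rw [sigmaCoeff, if_neg htop, if_pos rfl]
  push Not at htop
  have hN1 : 0 < N - 1 := by linarith
  have hκ : 0 < K / (N - 1) := div_pos hK hN1
  have hsOf (x : ℝ) : sOf (K / (N - 1)) x = sin (√(K / (N - 1)) * x) / √(K / (N - 1)) := by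
    rw [sOf, if_pos hκ]
  have hc : √(K / (N - 1)) ≠ 0 := (sqrt_pos.2 hκ).ne'
  have hlt : √(K / (N - 1)) * θ < π := by
    rw [← sqrt_sq hθ.le, ← sqrt_mul hκ.le, ← sqrt_sq pi_pos.le]
    refine sqrt_lt_sqrt (by positivity) ?_
    rwa [div_mul_eq_mul_div, div_lt_iff₀ hN1]
  rw [sigmaCoeff_of_lt hθ.ne' htop, hsOf, hsOf, div_div_div_cancel_right₀ hc,
    mul_left_comm]
  exact ENNReal.ofReal_le_ofReal (le_sin_mul_div_sin ⟨by positivity, hlt⟩ ht)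

lemma HasDerivAt.eventually_nhdsGT_pos {f : ℝ → ℝ} {f' x : ℝ} (hf : HasDerivAt f f' x)
    (hf' : 0 < f') (hx : f x = 0) : ∀ᶠ y in 𝓝[>] x, 0 < f y := by
  filter_upwards [((hasDerivAt_iff_tendsto_slope.1 hf).mono_left (nhdsGT_le_nhdsNE x)).eventually
    (eventually_gt_nhds hf'), self_mem_nhdsWithin] with y hy hxy using pos_of_slope_pos hxy hy hx

lemma exists_cosh_lt_one_add_rpow (c : ℝ) {p : ℝ} (hp : 0 < p) :
    ∃ a ∈ Ioc (0 : ℝ) 1, cosh (c * a) < (1 + a) ^ p := by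
  have hderiv : HasDerivAt (fun a => (1 + a) ^ p - cosh (c * a)) p 0 := by
    have h₁ := ((hasDerivAt_id (0 : ℝ)).const_add 1).rpow_const (p := p) (Or.inl (by norm_num))
    have h₂ := ((hasDerivAt_id (0 : ℝ)).const_mul c).cosh
    have h := h₁.sub h₂
    simp only [id, add_zero, one_rpow, mul_zero, sinh_zero, zero_mul, one_mul, mul_one,
      sub_zero] at h
    exact h
  obtain ⟨a, hpos, ha⟩ := ((hderiv.eventually_nhdsGT_pos hp (by simp)).and
    (Ioc_mem_nhdsGT one_pos)).exists
  exact ⟨a, ha, sub_pos.1 hpos⟩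

lemma exists_ofReal_le_sigmaCoeff_half (K : ℝ) {N : ℝ} (hN : 1 < N) :
    ∃ a ∈ Ioc (0 : ℝ) 1, ∃ r : ℝ, ENNReal.ofReal r ≤ sigmaCoeff K N (1 / 2) (2 * a) ∧
      1 < 2 * r * (1 + a) ^ (1 / (N - 1)) := by
  have hp : 0 < 1 / (N - 1) := one_div_pos.2 (sub_pos.2 hN)
  rcases le_or_gt 0 K with hK | hK
  · refine ⟨1, ⟨one_pos, le_rfl⟩, 1 / 2,
      ofReal_le_sigmaCoeff_of_nonneg hK hN ⟨by norm_num, by norm_num⟩ (by norm_num), ?_⟩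
    have := one_lt_rpow (by norm_num : (1 : ℝ) < 1 + 1) hp
    linarith
  · set c := √(-(K / (N - 1)))
    have hc : 0 < c := sqrt_pos.2 (neg_pos.2 (div_neg_of_neg_of_pos hK (sub_pos.2 hN)))
    obtain ⟨a, ha, hlt⟩ := exists_cosh_lt_one_add_rpow c hp
    have hsinh : sinh (c * a) ≠ 0 := (sinh_pos_iff.2 (mul_pos hc ha.1)).ne'
    refine ⟨a, ha, 1 / (2 * cosh (c * a)), le_of_eq ?_, ?_⟩
    · rw [sigmaCoeff_of_neg hK hN _ (by linarith [ha.1]),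
        show c * (1 / 2 * (2 * a)) = c * a by ring, show c * (2 * a) = 2 * (c * a) by ring,
        sinh_two_mul]
      congr 1
      field_simp
    · rw [show 2 * (1 / (2 * cosh (c * a))) * (1 + a) ^ (1 / (N - 1)) =
          (1 + a) ^ (1 / (N - 1)) / cosh (c * a) by field_simp]
      exact (one_lt_div (cosh_pos _)).2 hlt

lemma densSupport_eq_Icc {h : ℝ → ℝ} {a b : ℝ} (hab : a < b) (hmeas : Measurable h)
    (hpos : ∀ x ∈ Ioo a b, 0 < h x) (hzero : ∀ x ∉ Icc a b, h x = 0) :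
    densSupport h = Icc a b := by
  have hnull (U : Set ℝ) := withDensity_apply_eq_zero' (μ := volume) (s := U)
    hmeas.ennreal_ofReal.aemeasurable
  ext x
  simp only [densSupport, mem_ofPred_eq, pos_iff_ne_zero, Ne, hnull]
  constructor
  · intro hx
    by_contra hx'
    refine hx _ isClosed_Icc.isOpen_compl hx' (measure_mono_null ?_ measure_empty)
    rintro y ⟨hy, hyU⟩
    exact hy (by rw [hzero y hyU, ENNReal.ofReal_zero])
  · intro hx U hU hxU
    have hne : (U ∩ Ioo a b).Nonempty := mem_closure_iff.1 (by rwa [closure_Ioo hab.ne]) U hU hxU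
    refine (hU.inter isOpen_Ioo).measure_ne_zero volume hne ∘ measure_mono_null ?_
    rintro y ⟨hyU, hy⟩
    exact ⟨(ENNReal.ofReal_pos.2 (hpos y hy)).ne', hyU⟩

lemma isQCDDensity_zero_of_le_mul {Q N m : ℝ} {h : ℝ → ℝ} (hQ : 0 < Q) (hN : 1 < N)
    (hm : 0 ≤ m) (hh : ∀ x, 0 ≤ h x) (hcont : ContinuousOn h (densSupport h))
    (hconv : Convex ℝ (densSupport h)) (hbound : ∀ x ∈ densSupport h, m ≤ h x ∧ h x ≤ Q * m) :
    IsQCDDensity Q 0 N h := by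
  refine ⟨hh, hcont, fun x₀ hx₀ x₁ hx₁ t ht => ?_⟩
  set p := 1 / (N - 1)
  have hp : 0 < p := one_div_pos.2 (sub_pos.2 hN)
  have hupper (x) (hx : x ∈ densSupport h) : h x ^ p ≤ Q ^ p * m ^ p := by
    rw [← mul_rpow hQ.le hm]
    exact rpow_le_rpow (hh x) (hbound x hx).2 hp.le
  have hmid : (1 - t) * x₀ + t * x₁ ∈ densSupport h := by
    simpa using hconv hx₀ hx₁ (sub_nonneg.2 ht.2.le) ht.1.le (sub_add_cancel 1 t)
  have ht₀ : 0 ≤ t := ht.1.le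
  have ht₁ : 0 ≤ 1 - t := sub_nonneg.2 ht.2.le
  have h₀ : 0 ≤ (1 - t) * h x₀ ^ p := mul_nonneg ht₁ (rpow_nonneg (hh x₀) p)
  have h₁ : 0 ≤ t * h x₁ ^ p := mul_nonneg ht₀ (rpow_nonneg (hh x₁) p)
  rw [sigmaCoeff_zero hN, sigmaCoeff_zero hN, ← ENNReal.ofReal_mul ht₁,
    ← ENNReal.ofReal_mul ht₀, ← ENNReal.ofReal_add h₀ h₁,
    ← ENNReal.ofReal_mul (by positivity)]
  refine ENNReal.ofReal_le_ofReal ?_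
  calc Q ^ (-p) * ((1 - t) * h x₀ ^ p + t * h x₁ ^ p)
      ≤ Q ^ (-p) * ((1 - t) * (Q ^ p * m ^ p) + t * (Q ^ p * m ^ p)) := by
        gcongr
        exacts [hupper x₀ hx₀, hupper x₁ hx₁]
    _ = m ^ p := by
        rw [rpow_neg hQ.le]
        field_simp
        ring
    _ ≤ h ((1 - t) * x₀ + t * x₁) ^ p := rpow_le_rpow hm (hbound _ hmid).1 hp.le

lemma IsCDDensity.sigmaCoeff_half_mul_le {K N : ℝ} {h : ℝ → ℝ} (hh : IsCDDensity K N h)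
    {x₀ x₁ : ℝ} (hx₀ : x₀ ∈ densSupport h) (hx₁ : x₁ ∈ densSupport h) :
    sigmaCoeff K N (1 / 2) |x₁ - x₀| *
        (ENNReal.ofReal (h x₀ ^ (1 / (N - 1))) + ENNReal.ofReal (h x₁ ^ (1 / (N - 1)))) ≤
      ENNReal.ofReal (h ((x₀ + x₁) / 2) ^ (1 / (N - 1))) := by
  have := hh.2.2 x₀ hx₀ x₁ hx₁ (1 / 2) ⟨by norm_num, by norm_num⟩
  rwa [one_rpow, ENNReal.ofReal_one, one_mul, show (1 : ℝ) - 1 / 2 = 1 / 2 by norm_num, ← mul_add,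
    show 1 / 2 * x₀ + 1 / 2 * x₁ = (x₀ + x₁) / 2 by ring] at this

noncomputable def vDensity (x : ℝ) : ℝ := if |x| ≤ 1 then 1 + |x| else 0

lemma vDensity_of_mem {x : ℝ} (hx : x ∈ Icc (-1 : ℝ) 1) : vDensity x = 1 + |x| :=
  if_pos (abs_le.2 hx)

lemma vDensity_nonneg (x : ℝ) : 0 ≤ vDensity x := by
  unfold vDensity
  split_ifs <;> positivity

lemma densSupport_vDensity : densSupport vDensity = Icc (-1) 1 := by
  refine densSupport_eq_Icc (by norm_num) ?_ (fun x hx => ?_) (fun x hx => if_neg ?_)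
  · exact Measurable.ite (measurableSet_le (by fun_prop) measurable_const) (by fun_prop)
      measurable_const
  · rw [vDensity_of_mem (Ioo_subset_Icc_self hx)]
    positivity
  · rwa [abs_le]

lemma isQCDDensity_vDensity : IsQCDDensity 2 0 2 vDensity := by
  refine isQCDDensity_zero_of_le_mul two_pos one_lt_two zero_le_one vDensity_nonneg ?_ ?_ ?_ <;>
    rw [densSupport_vDensity]
  · exact ContinuousOn.congr (by fun_prop) fun x hx => vDensity_of_mem hx
  · exact convex_Icc _ _
  · intro x hx
    rw [vDensity_of_mem hx]
    constructor <;> linarith [abs_nonneg x, abs_le.2 hx]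

lemma not_isCDDensity_vDensity (K : ℝ) {N : ℝ} (hN : 1 < N) : ¬ IsCDDensity K N vDensity := by
  intro hCD
  obtain ⟨a, ⟨ha₀, ha₁⟩, r, hr, hlt⟩ := exists_ofReal_le_sigmaCoeff_half K hN
  have hmem {x : ℝ} (hx : |x| ≤ a) : x ∈ densSupport vDensity := by
    rw [densSupport_vDensity, mem_Icc, ← abs_le]
    exact hx.trans ha₁
  have h := hCD.sigmaCoeff_half_mul_le (hmem (abs_neg a ▸ (abs_of_pos ha₀).le))
    (hmem (abs_of_pos ha₀).le)
  simp only [vDensity, abs_neg, abs_of_pos ha₀, ha₁, zero_le_one, if_true, neg_add_cancel, zero_div,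
    abs_zero, add_zero, one_rpow, ENNReal.ofReal_one, sub_neg_eq_add, ← two_mul, abs_mul, abs_two]
    at h
  have h' := (mul_le_mul_left hr _).trans h
  rw [← ENNReal.ofReal_ofNat 2, ← ENNReal.ofReal_mul zero_le_two,
    ← ENNReal.ofReal_mul' (by positivity), ← ENNReal.ofReal_one,
    ENNReal.ofReal_le_ofReal_iff zero_le_one] at h'
  linarith

/-- The density `h(x) = (1+|x|)·1_{[-1,1]}(x)` is a `QCD(2,0,2)` density
but is not a `CD(K',N')` density for any `K' ∈ ℝ` and `N' ∈ (1,∞)`. -/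
theorem qcd_example_not_cd :
    IsQCDDensity 2 0 2 (fun x : ℝ => if |x| ≤ 1 then 1 + |x| else 0) ∧
    ∀ K' N' : ℝ, 1 < N' →
      ¬ IsCDDensity K' N' (fun x : ℝ => if |x| ≤ 1 then 1 + |x| else 0) :=
  ⟨isQCDDensity_vDensity, fun K' _ hN' => not_isCDDensity_vDensity K' hN'⟩
end

section
/- Let p ∈ (1,∞), let μ be a finite nonzero measure on a measurable space, and let f be a real-valued function with f ∈ L^p(μ). Then the function ℝ ∋ c ↦ ∫ |f − c|^p dμ attains a unique minimum at some c* ∈ ℝ, and c* is the unique real number satisfying ∫ |f − c*|^{p−2}·(f − c*) dμ = 0. -/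
/-! `φ(s) = |s| ^ (p - 2) * s` is `1 / p` times the derivative of the strictly convex
function `|s| ^ p`; it is continuous, odd, strictly increasing and tends to `-∞` at `-∞`.
Hence `G(c) = ∫ φ(f - c) dμ` is continuous and strictly decreasing, negative for large `c`
and (applying this to `-f`) positive for small `c`, so it has exactly one zero `c₀`.
Integrating the tangent-line inequality `|b| ^ p + p φ(b) (a - b) < |a| ^ p` (for `a ≠ b`)
at `b = f - c₀`, `a = f - c` shows that `c₀` is the strict minimiser of
`c ↦ ∫ |f - c| ^ p dμ`. -/

open MeasureTheory Filter Set Topology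

section AbsRpowSubTwoMul

variable {p : ℝ}

lemma abs_rpow_sub_two_mul_self_of_nonneg (hp : p ≠ 1) {s : ℝ} (hs : 0 ≤ s) :
    |s| ^ (p - 2) * s = s ^ (p - 1) := by
  rcases hs.eq_or_lt with rfl | hs
  · simp [Real.zero_rpow (sub_ne_zero.2 hp)]
  · rw [abs_of_pos hs, ← Real.rpow_add_one hs.ne']
    ring_nf

lemma abs_rpow_sub_two_mul_neg (s : ℝ) : |-s| ^ (p - 2) * -s = -(|s| ^ (p - 2) * s) := by
  rw [abs_neg, mul_neg]

lemma abs_abs_rpow_sub_two_mul (hp : p ≠ 1) (s : ℝ) :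
    |(|s| ^ (p - 2) * s)| = |s| ^ (p - 1) := by
  have h := abs_rpow_sub_two_mul_self_of_nonneg hp (abs_nonneg s)
  rwa [abs_abs, ← abs_of_nonneg (by positivity : (0 : ℝ) ≤ |s| ^ (p - 2)), ← abs_mul] at h

lemma strictMono_abs_rpow_sub_two_mul (hp : 1 < p) :
    StrictMono fun s : ℝ => |s| ^ (p - 2) * s :=
  strictMono_of_odd_strictMonoOn_nonneg abs_rpow_sub_two_mul_neg <|
    (Real.strictMonoOn_rpow_Ici_of_exponent_pos (sub_pos.2 hp)).congr fun _ hs =>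
      (abs_rpow_sub_two_mul_self_of_nonneg hp.ne' hs).symm

lemma continuous_abs_rpow_sub_two_mul (hp : 1 < p) :
    Continuous fun s : ℝ => |s| ^ (p - 2) * s := by
  refine continuous_iff_continuousAt.2 fun s => ?_
  rcases eq_or_ne s 0 with rfl | hs
  · have h : Tendsto (fun s : ℝ => |s| ^ (p - 1)) (𝓝 0) (𝓝 0) := by
      simpa [Real.zero_rpow (sub_pos.2 hp).ne'] using
        (continuous_abs.rpow_const fun _ => Or.inr (sub_pos.2 hp).le).tendsto (0 : ℝ)
    rw [ContinuousAt, mul_zero, tendsto_zero_iff_abs_tendsto_zero]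
    simpa only [Function.comp_def, abs_abs_rpow_sub_two_mul hp.ne'] using h
  · exact ((continuous_abs.continuousAt.rpow_const (Or.inl (abs_ne_zero.2 hs))).mul
      continuousAt_id)

lemma tendsto_abs_rpow_sub_two_mul_atBot (hp : 1 < p) :
    Tendsto (fun s : ℝ => |s| ^ (p - 2) * s) atBot atBot := by
  have h : Tendsto (fun s : ℝ => -|s| ^ (p - 1)) atBot atBot :=
    tendsto_neg_atTop_atBot.comp <|
      (tendsto_rpow_atTop (sub_pos.2 hp)).comp tendsto_abs_atBot_atTop
  refine h.congr' <| (eventually_le_atBot 0).mono fun s hs => ?_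
  rw [← abs_abs_rpow_sub_two_mul hp.ne',
    abs_of_nonpos (mul_nonpos_of_nonneg_of_nonpos (by positivity) hs)]
  simp

lemma StrictConvexOn.add_mul_sub_lt {S : Set ℝ} {f : ℝ → ℝ} {f' x y : ℝ}
    (hf : StrictConvexOn ℝ S f) (hx : x ∈ S) (hy : y ∈ S) (hxy : x ≠ y)
    (hf' : HasDerivAt f f' x) :
    f x + f' * (y - x) < f y := by
  rcases hxy.lt_or_gt with h | h
  · have := hf.lt_slope_of_hasDerivAt hx hy h hf'
    rw [slope_def_field, lt_div_iff₀ (sub_pos.2 h)] at this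
    linarith
  · have := hf.slope_lt_of_hasDerivAt hy hx h hf'
    rw [slope_def_field, div_lt_iff₀ (sub_pos.2 h)] at this
    linarith

lemma strictConvexOn_abs_rpow (hp : 1 < p) : StrictConvexOn ℝ univ fun s : ℝ => |s| ^ p := by
  refine StrictMono.strictConvexOn_univ_of_deriv
    (continuous_abs.rpow_const fun _ => Or.inr (by linarith)) ?_
  have : deriv (fun s : ℝ => |s| ^ p) = fun s => p * (|s| ^ (p - 2) * s) := by
    ext s; rw [(hasDerivAt_abs_rpow s hp).deriv, mul_assoc]
  rw [this]
  exact (strictMono_abs_rpow_sub_two_mul hp).const_mul (by linarith)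

lemma abs_rpow_add_mul_sub_lt (hp : 1 < p) {a b : ℝ} (hab : b ≠ a) :
    |b| ^ p + p * (|b| ^ (p - 2) * b) * (a - b) < |a| ^ p := by
  have := (strictConvexOn_abs_rpow hp).add_mul_sub_lt (mem_univ b) (mem_univ a) hab
    (hasDerivAt_abs_rpow b hp)
  convert this using 2
  ring

end AbsRpowSubTwoMul

namespace MeasureTheory

variable {α : Type*} [MeasurableSpace α] {μ : Measure α}

lemma integral_lt_integral_of_forall_lt (hμ : μ ≠ 0) {g h : α → ℝ} (hg : Integrable g μ)
    (hh : Integrable h μ) (hlt : ∀ x, g x < h x) : ∫ x, g x ∂μ < ∫ x, h x ∂μ := by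
  rw [← sub_pos, ← integral_sub hh hg, integral_pos_iff_support_of_nonneg
    (fun x => sub_nonneg.2 (hlt x).le) (hh.sub hg)]
  have : (Function.support fun x => h x - g x) = univ :=
    eq_univ_of_forall fun x => sub_ne_zero.2 (hlt x).ne'
  rw [this]
  exact Measure.measure_univ_pos.2 hμ

variable [IsFiniteMeasure μ] {p : ℝ} {g : α → ℝ}

lemma MemLp.integrable_abs_rpow {q : ℝ} (hg : MemLp g (ENNReal.ofReal p) μ) (hq : 0 < q)
    (hqp : q ≤ p) : Integrable (fun x => |g x| ^ q) μ := by
  have h := (hg.mono_exponent (ENNReal.ofReal_le_ofReal hqp)).integrable_norm_rpow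
    (by simpa using hq) ENNReal.ofReal_ne_top
  simpa [ENNReal.toReal_ofReal hq.le] using h

lemma MemLp.integrable_abs_rpow_sub_two_mul (hp : 1 < p) (hg : MemLp g (ENNReal.ofReal p) μ) :
    Integrable (fun x => |g x| ^ (p - 2) * g x) μ := by
  refine (hg.integrable_abs_rpow (sub_pos.2 hp) (by linarith)).mono'
    ((continuous_abs_rpow_sub_two_mul hp).comp_aestronglyMeasurable hg.1) ?_
  filter_upwards with x
  rw [Real.norm_eq_abs, abs_abs_rpow_sub_two_mul hp.ne']

variable {f : α → ℝ}

lemma continuous_integral_abs_rpow_sub_two_mul_sub (hp : 1 < p)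
    (hf : MemLp f (ENNReal.ofReal p) μ) :
    Continuous fun c => ∫ x, |f x - c| ^ (p - 2) * (f x - c) ∂μ := by
  refine continuous_iff_continuousAt.2 fun c₀ => ?_
  have hbound : MemLp (fun x => |f x| + (|c₀| + 1)) (ENNReal.ofReal p) μ :=
    hf.abs.add (memLp_const _)
  refine continuousAt_of_dominated (bound := fun x => (|f x| + (|c₀| + 1)) ^ (p - 1))
    (Eventually.of_forall fun c =>
      (continuous_abs_rpow_sub_two_mul hp).comp_aestronglyMeasurable
        (hf.1.sub aestronglyMeasurable_const)) ?_ ?_ ?_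
  · filter_upwards [Metric.ball_mem_nhds c₀ one_pos] with c hc
    refine Eventually.of_forall fun x => ?_
    rw [Real.norm_eq_abs, abs_abs_rpow_sub_two_mul hp.ne']
    have : |c - c₀| < 1 := by rwa [Metric.mem_ball, Real.dist_eq] at hc
    gcongr
    calc |f x - c| ≤ |f x| + |c| := abs_sub _ _
      _ ≤ |f x| + (|c₀| + 1) := by linarith [abs_sub_abs_le_abs_sub c c₀]
  · simpa [abs_of_nonneg (by positivity : (0 : ℝ) ≤ |f _| + (|c₀| + 1))] using
      hbound.integrable_abs_rpow (sub_pos.2 hp) (by linarith)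
  · exact Eventually.of_forall fun x =>
      ((continuous_abs_rpow_sub_two_mul hp).comp (continuous_sub_left (f x))).continuousAt

lemma strictAnti_integral_abs_rpow_sub_two_mul_sub (hμ : μ ≠ 0) (hp : 1 < p)
    (hf : MemLp f (ENNReal.ofReal p) μ) :
    StrictAnti fun c => ∫ x, |f x - c| ^ (p - 2) * (f x - c) ∂μ := fun c c' hcc' =>
  integral_lt_integral_of_forall_lt hμ
    ((hf.sub (memLp_const c')).integrable_abs_rpow_sub_two_mul hp)
    ((hf.sub (memLp_const c)).integrable_abs_rpow_sub_two_mul hp)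
    fun x => strictMono_abs_rpow_sub_two_mul hp (sub_lt_sub_left hcc' (f x))

lemma integral_abs_rpow_sub_two_mul_sub_le (hp : 1 < p) (hf : MemLp f (ENNReal.ofReal p) μ)
    {t c : ℝ} (hc : 0 ≤ c) :
    ∫ x, |f x - c| ^ (p - 2) * (f x - c) ∂μ ≤
      ∫ x, |f x| ^ (p - 1) ∂μ + μ.real {x | f x ≤ t} * (|t - c| ^ (p - 2) * (t - c)) := by
  set A := {x | f x ≤ t}
  have hA : NullMeasurableSet A μ := hf.1.nullMeasurableSet_le aestronglyMeasurable_const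
  have hmono := (strictMono_abs_rpow_sub_two_mul hp).monotone
  have hbound : ∀ x, |f x - c| ^ (p - 2) * (f x - c) ≤
      |f x| ^ (p - 1) + A.indicator (fun _ => |t - c| ^ (p - 2) * (t - c)) x := by
    intro x
    by_cases hx : x ∈ A
    · rw [indicator_of_mem hx]
      have : |f x - c| ^ (p - 2) * (f x - c) ≤ |t - c| ^ (p - 2) * (t - c) :=
        hmono (sub_le_sub_right hx c)
      linarith [Real.rpow_nonneg (abs_nonneg (f x)) (p - 1)]
    · rw [indicator_of_notMem hx, add_zero, ← abs_abs_rpow_sub_two_mul hp.ne']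
      exact (hmono (by linarith)).trans (le_abs_self _)
  have hint := hf.integrable_abs_rpow (sub_pos.2 hp) (by linarith)
  have hind : Integrable (A.indicator fun _ => |t - c| ^ (p - 2) * (t - c)) μ :=
    (integrableOn_const (measure_ne_top μ A)).integrable_indicator₀ hA
  calc ∫ x, |f x - c| ^ (p - 2) * (f x - c) ∂μ
      ≤ ∫ x, (|f x| ^ (p - 1) + A.indicator (fun _ => |t - c| ^ (p - 2) * (t - c)) x) ∂μ :=
        integral_mono ((hf.sub (memLp_const c)).integrable_abs_rpow_sub_two_mul hp)
          (hint.add hind) hbound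
    _ = _ := by
        rw [integral_add hint hind, integral_indicator₀ hA, setIntegral_const, smul_eq_mul]

lemma exists_integral_abs_rpow_sub_two_mul_sub_neg (hμ : μ ≠ 0) (hp : 1 < p)
    (hf : MemLp f (ENNReal.ofReal p) μ) :
    ∃ c, ∫ x, |f x - c| ^ (p - 2) * (f x - c) ∂μ < 0 := by
  obtain ⟨t, ht⟩ : ∃ t : ℝ, μ {x | f x ≤ t} ≠ 0 := by
    by_contra! h
    have hcover : ⋃ n : ℕ, {x | f x ≤ n} = univ :=
      eq_univ_of_forall fun x => mem_iUnion.2 (exists_nat_ge (f x))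
    exact hμ (Measure.measure_univ_eq_zero.1 (hcover ▸ measure_iUnion_null fun n => h n))
  have hpos : 0 < μ.real {x | f x ≤ t} := ENNReal.toReal_pos ht (measure_ne_top _ _)
  have hsub : Tendsto (fun c : ℝ => t - c) atTop atBot := by
    simpa only [sub_eq_add_neg] using
      tendsto_atBot_add_const_left atTop t tendsto_neg_atTop_atBot
  have hlim : Tendsto (fun c => ∫ x, |f x| ^ (p - 1) ∂μ +
      μ.real {x | f x ≤ t} * (|t - c| ^ (p - 2) * (t - c))) atTop atBot :=
    tendsto_atBot_add_const_left _ _ <|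
      ((tendsto_abs_rpow_sub_two_mul_atBot hp).comp hsub).const_mul_atBot hpos
  obtain ⟨c, hc, hneg⟩ := ((eventually_ge_atTop 0).and (hlim.eventually_lt_atBot 0)).exists
  exact ⟨c, (integral_abs_rpow_sub_two_mul_sub_le hp hf hc).trans_lt hneg⟩

lemma exists_integral_abs_rpow_sub_two_mul_sub_pos (hμ : μ ≠ 0) (hp : 1 < p)
    (hf : MemLp f (ENNReal.ofReal p) μ) :
    ∃ c, 0 < ∫ x, |f x - c| ^ (p - 2) * (f x - c) ∂μ := by
  obtain ⟨c, hc⟩ := exists_integral_abs_rpow_sub_two_mul_sub_neg hμ hp hf.neg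
  refine ⟨-c, ?_⟩
  have hodd : ∀ x, |(-f) x - c| ^ (p - 2) * ((-f) x - c) =
      -(|f x - -c| ^ (p - 2) * (f x - -c)) := fun x => by
    rw [← abs_rpow_sub_two_mul_neg, Pi.neg_apply]
    ring_nf
  simp only [hodd, integral_neg, neg_lt_zero] at hc
  exact hc

lemma integral_abs_sub_rpow_lt_of_integral_eq_zero (hμ : μ ≠ 0) (hp : 1 < p)
    (hf : MemLp f (ENNReal.ofReal p) μ) {c₀ c : ℝ}
    (h₀ : ∫ x, |f x - c₀| ^ (p - 2) * (f x - c₀) ∂μ = 0) (hc : c ≠ c₀) :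
    ∫ x, |f x - c₀| ^ p ∂μ < ∫ x, |f x - c| ^ p ∂μ := by
  have hint : ∀ c, Integrable (fun x => |f x - c| ^ p) μ := fun c =>
    (hf.sub (memLp_const c)).integrable_abs_rpow (by linarith) le_rfl
  have hlin : Integrable (fun x => p * (|f x - c₀| ^ (p - 2) * (f x - c₀)) * (c₀ - c)) μ :=
    (((hf.sub (memLp_const c₀)).integrable_abs_rpow_sub_two_mul hp).const_mul p).mul_const _
  calc ∫ x, |f x - c₀| ^ p ∂μ
      = ∫ x, (|f x - c₀| ^ p +
          p * (|f x - c₀| ^ (p - 2) * (f x - c₀)) * (c₀ - c)) ∂μ := by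
        rw [integral_add (hint c₀) hlin, integral_mul_const, integral_const_mul, h₀]
        ring
    _ < ∫ x, |f x - c| ^ p ∂μ := integral_lt_integral_of_forall_lt hμ ((hint c₀).add hlin)
        (hint c) fun x => by
          simpa only [sub_sub_sub_cancel_left] using
            abs_rpow_add_mul_sub_lt hp (a := f x - c) (b := f x - c₀) (by simpa using hc.symm)

end MeasureTheory

/-- For `p ∈ (1,∞)`, a finite nonzero measure `μ` and `f ∈ L^p(μ)`,
the map `c ↦ ∫ |f − c|^p dμ` attains a unique minimum at some `c₀ ∈ ℝ`, and `c₀` is the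
unique real number satisfying `∫ |f − c₀|^{p−2}·(f − c₀) dμ = 0`. -/
theorem lp_poincare_center_exists_unique {α : Type*} [MeasurableSpace α]
    (μ : Measure α) [IsFiniteMeasure μ] (hμ : μ ≠ 0)
    (p : ℝ) (hp : 1 < p) (f : α → ℝ) (hf : MemLp f (ENNReal.ofReal p) μ) :
    ∃ c₀ : ℝ,
      (∀ c : ℝ, c ≠ c₀ → ∫ x, |f x - c₀| ^ p ∂μ < ∫ x, |f x - c| ^ p ∂μ) ∧
      (∫ x, |f x - c₀| ^ (p - 2) * (f x - c₀) ∂μ = 0) ∧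
      (∀ c : ℝ, (∫ x, |f x - c| ^ (p - 2) * (f x - c) ∂μ = 0) → c = c₀) := by
  obtain ⟨c₁, hc₁⟩ := exists_integral_abs_rpow_sub_two_mul_sub_pos hμ hp hf
  obtain ⟨c₂, hc₂⟩ := exists_integral_abs_rpow_sub_two_mul_sub_neg hμ hp hf
  obtain ⟨c₀, -, h₀⟩ := intermediate_value_uIcc
    (continuous_integral_abs_rpow_sub_two_mul_sub hp hf).continuousOn
    (mem_uIcc.2 (Or.inr ⟨hc₂.le, hc₁.le⟩))
  exact ⟨c₀, fun c hc => integral_abs_sub_rpow_lt_of_integral_eq_zero hμ hp hf h₀ hc, h₀,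
    fun c hc =>
      (strictAnti_integral_abs_rpow_sub_two_mul_sub hμ hp hf).injective (hc.trans h₀.symm)⟩
end
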